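/- arXiv:1403.4172 — 3 statements merged into one kernel-verified Lean document; each statement's English description precedes it below -/
import Mathlib

section
/- Let P be a poset with least element 0, let Z be a lower complete sublattice of P which is P-central, and let I ⊆ P be Z-complete. Then c_Z I = {c_Z(p) : p ∈ I} is an upper complete sublattice of the subposet Z: every subset of c_Z I has a least upper bound within the subposet Z, and this least upper bound lies in c_Z I. -/
/-- `S` is `Z`-disjoint: there is `f : S → Z` with `p ≤ f p` and `f p ∧ f q = 0`
for distinct `p, q ∈ S`. -/
def ZDisjoint {β : Type*} [PartialOrder β] [OrderBot β] (Z S : Set β) : Prop :=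
  ∃ f : β → β, (∀ p ∈ S, f p ∈ Z ∧ p ≤ f p) ∧
    ∀ p ∈ S, ∀ q ∈ S, p ≠ q → Disjoint (f p) (f q)

/-- `I` is `Z`-complete: every `Z`-disjoint `S ⊆ I` has a supremum lying in `I`, and
whenever `{p, q}` is `Z`-disjoint with supremum in `I`, both `p` and `q` lie in `I`. -/
def ZComplete {β : Type*} [PartialOrder β] [OrderBot β] (Z I : Set β) : Prop :=
  (∀ S ⊆ I, ZDisjoint Z S → ∃ s, IsLUB S s ∧ s ∈ I) ∧
  (∀ p q s, ZDisjoint Z {p, q} → IsLUB {p, q} s → s ∈ I → p ∈ I ∧ q ∈ I)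

/-- `Z` is `S`-central: for every `p ∈ S` and `y ∈ Z` there is `z ∈ Z` with `y ∧ z = 0`
and `p` the supremum of some `q ≤ y` and `r ≤ z`. -/
def SCentral {β : Type*} [PartialOrder β] [OrderBot β] (Z S : Set β) : Prop :=
  ∀ p ∈ S, ∀ y ∈ Z, ∃ z ∈ Z, Disjoint y z ∧ ∃ q r, q ≤ y ∧ r ≤ z ∧ IsLUB {q, r} p

/-!
Take `w`, the infimum of the upper bounds of `S` lying in `Z`, and by Zorn a maximal
`T ⊆ I ∩ Iic w` whose covers are pairwise disjoint. Then `T` is `Z`-disjoint, so it has a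
supremum `t₀ ∈ I`, and `c t₀ ≤ w`. Conversely, every `Z`-upper bound `z` of `T` lies above each
`p ∈ I` with `p ≤ w`: otherwise centrality splits `p = q ⊔ r` with `q ≤ z` and `r` below some
`z' ∈ Z` disjoint from `z`; `Z`-completeness puts `r` in `I`, `r ≰ z` since `p ≰ z`, and `r`
could be added to `T`, contradicting maximality. Hence `c t₀` bounds `S`, so `c t₀ = w`.
-/

theorem exists_maximal_pairwiseDisjoint_subset {ι β : Type*} [PartialOrder β] [OrderBot β]
    (A : Set ι) (f : ι → β) : ∃ T, Maximal (fun T => T ⊆ A ∧ T.PairwiseDisjoint f) T := by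
  refine zorn_subset _ fun ch hch hchain => ⟨⋃₀ ch, ⟨?_, ?_⟩, fun _ => Set.subset_sUnion_of_mem⟩
  · exact Set.sUnion_subset fun T hT => (hch hT).1
  · exact (hchain.pairwiseDisjoint_sUnion f).2 fun T hT => (hch hT).2

section

variable {α : Type*} [PartialOrder α] [OrderBot α] {Z : Set α}

theorem zDisjoint_pair {y z q r : α} (hy : y ∈ Z) (hz : z ∈ Z) (hyz : Disjoint y z)
    (hq : q ≤ y) (hr : r ≤ z) : ZDisjoint Z {q, r} := by
  classical
  refine ⟨fun x => if x = q then y else z, ?_, ?_⟩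
  · rintro x (rfl | rfl)
    · simp [hy, hq]
    · dsimp only
      split_ifs with hxq
      · exact ⟨hy, hxq ▸ hq⟩
      · exact ⟨hz, hr⟩
  · rintro x (rfl | rfl) x' (rfl | rfl) hne
    · exact absurd rfl hne
    · simpa [Ne.symm hne] using hyz
    · simpa [hne] using hyz.symm
    · exact absurd rfl hne

theorem zDisjoint_of_pairwiseDisjoint {c : α → α} (hc : ∀ p, c p ∈ Z ∧ p ≤ c p) {T : Set α}
    (hT : T.PairwiseDisjoint c) : ZDisjoint Z T :=
  ⟨c, fun p _ => hc p, hT⟩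

theorem ZComplete.le_of_maximal {I : Set α} (hI : ZComplete Z I) (hcen : SCentral Z I)
    {c : α → α} (hcover : ∀ p z, z ∈ Z → p ≤ z → c p ≤ z) {w : α} {T : Set α}
    (hT : Maximal (fun T => T ⊆ I ∩ Set.Iic w ∧ T.PairwiseDisjoint c) T)
    {p : α} (hpI : p ∈ I) (hpw : p ≤ w) {z : α} (hz : z ∈ Z) (hTz : z ∈ upperBounds T) :
    p ≤ z := by
  by_contra hpz
  obtain ⟨z', hz', hzz', q, r, hqz, hrz', hqr⟩ := hcen p hpI z hz
  obtain ⟨-, hrI⟩ := hI.2 q r p (zDisjoint_pair hz hz' hzz' hqz hrz') hqr hpI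
  have hrz : ¬ r ≤ z := fun hrz =>
    hpz <| hqr.2 <| by
      rintro x (rfl | rfl)
      exacts [hqz, (hzz' hrz hrz').trans bot_le]
  have hinsert : insert r T ⊆ I ∩ Set.Iic w ∧ (insert r T).PairwiseDisjoint c := by
    refine ⟨Set.insert_subset ⟨hrI, (hqr.1 (by simp)).trans hpw⟩ hT.1.1, hT.1.2.insert ?_⟩
    exact fun t ht _ => (hzz'.mono (hcover t z hz (hTz ht)) (hcover r z' hz' hrz')).symm
  exact hrz (hTz (hT.2 hinsert (Set.subset_insert r T) (Set.mem_insert r T)))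

end

/-- If `Z` is a lower complete sublattice of `P` (every subset of `Z` has an infimum in
`P` lying in `Z`), `Z` is `P`-central and `I` is `Z`-complete, then `c_Z I` is an upper
complete sublattice of the subposet `Z`: every subset of `c_Z I` has a least upper bound
within `Z`, which lies in `c_Z I`.  Here `c : α → α` is the `Z`-cover map, characterized
by `c p ∈ Z` and `c p = inf {z ∈ Z | p ≤ z}` in `P`. -/
theorem stmt2 {α : Type*} [PartialOrder α] [OrderBot α] (Z I : Set α) (c : α → α)
    (hZl : ∀ S ⊆ Z, ∃ i, IsGLB S i ∧ i ∈ Z)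
    (hc : ∀ p, c p ∈ Z ∧ IsGLB {z | z ∈ Z ∧ p ≤ z} (c p))
    (hcen : SCentral Z Set.univ)
    (hI : ZComplete Z I) :
    ∀ S ⊆ c '' I, ∃ s ∈ c '' I, (∀ p ∈ S, p ≤ s) ∧
      ∀ w ∈ Z, (∀ p ∈ S, p ≤ w) → s ≤ w := by
  intro S hS
  have hcZ p : c p ∈ Z := (hc p).1
  have hle_c p : p ≤ c p := (hc p).2.2 fun _ hz => hz.2
  have hcover p z (hz : z ∈ Z) (hpz : p ≤ z) : c p ≤ z := (hc p).2.1 ⟨hz, hpz⟩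
  obtain ⟨w, hw, hwZ⟩ := hZl {z | z ∈ Z ∧ z ∈ upperBounds S} fun _ hz => hz.1
  have hSw : w ∈ upperBounds S := fun _ hs => hw.2 fun _ hz => hz.2 hs
  obtain ⟨T, hT⟩ := exists_maximal_pairwiseDisjoint_subset (I ∩ Set.Iic w) c
  obtain ⟨t₀, ht₀, ht₀I⟩ :=
    hI.1 T (fun _ ht => (hT.1.1 ht).1)
      (zDisjoint_of_pairwiseDisjoint (fun p => ⟨hcZ p, hle_c p⟩) hT.1.2)
  have hct₀w : c t₀ ≤ w := hcover t₀ w hwZ (ht₀.2 fun _ ht => (hT.1.1 ht).2)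
  have hSct₀ : c t₀ ∈ upperBounds S := by
    rintro _ hs
    obtain ⟨p, hpI, rfl⟩ := hS hs
    exact hcover p _ (hcZ t₀) (hI.le_of_maximal (fun p _ => hcen p trivial) hcover hT hpI
      ((hle_c p).trans (hSw hs)) (hcZ t₀) fun _ ht => (ht₀.1 ht).trans (hle_c t₀))
  exact ⟨c t₀, ⟨t₀, ht₀I, rfl⟩, hSct₀, fun w' hw'Z hw' => hct₀w.trans (hw.1 ⟨hw'Z, hw'⟩)⟩
end

section
/- Let P be a poset with least element 0, let Z be a Z-modular lower complete sublattice of P which is P-central, and let I ⊆ P be Z-complete. Then c_Z I = {c_Z(p) : p ∈ I} is a complete ideal of the subposet Z. -/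
/-- `Z` is `Z`-modular: whenever `y, z ∈ Z` with `y ∧ z = 0`, `p, q ∈ Z` with `p ≤ y`,
`q ≤ z` and `p, q` have a least upper bound `s` within the subposet `Z`, then `q` is the
greatest lower bound within `Z` of `z` and `s`. -/
def ZModular {β : Type*} [PartialOrder β] [OrderBot β] (Z : Set β) : Prop :=
  ∀ y ∈ Z, ∀ z ∈ Z, Disjoint y z → ∀ p ∈ Z, ∀ q ∈ Z, p ≤ y → q ≤ z →
    ∀ s ∈ Z, (p ≤ s ∧ q ≤ s ∧ ∀ w ∈ Z, p ≤ w → q ≤ w → s ≤ w) →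
      (q ≤ s ∧ ∀ w ∈ Z, w ≤ z → w ≤ s → w ≤ q)

/-!
Writing every `p ∈ I` as `q ∨ r` with `q` below a given `y ∈ Z` and `r` below some
`z ∈ Z` disjoint from `y` (centrality) puts both `q` and `r` in `I` (`Z`-completeness).
For `y ≤ c p`, modularity identifies `c q` with `y`, so `c '' I` is a lower set of `Z`.
For directedness, take a maximal `A ⊆ I` on which `c` is pairwise disjoint and let `p` be
its supremum, which lies in `I`. Decomposing any `p₀ ∈ I` along `y = c p`, the part `r`
has cover disjoint from `c p`, so maximality forces `r ∈ A`; hence `p₀ ≤ c p`, and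
`c p` is the greatest element of `c '' I`.
-/

section

variable {α : Type*} [PartialOrder α] {Z I : Set α} {c : α → α}

def IsZCover (Z : Set α) (c : α → α) : Prop :=
  ∀ p, c p ∈ Z ∧ IsGLB {z | z ∈ Z ∧ p ≤ z} (c p)

namespace IsZCover

variable (hc : IsZCover Z c)
include hc

theorem mem (p : α) : c p ∈ Z := (hc p).1

theorem le_cover (p : α) : p ≤ c p := (hc p).2.2 fun _ hz => hz.2

theorem cover_le {p z : α} (hz : z ∈ Z) (hpz : p ≤ z) : c p ≤ z := (hc p).2.1 ⟨hz, hpz⟩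

theorem cover_mono {p q : α} (hpq : p ≤ q) : c p ≤ c q :=
  hc.cover_le (hc.mem q) (hpq.trans (hc.le_cover q))

/-- The cover of a join is the join, within `Z`, of the covers. -/
theorem cover_isLUB_pair {a b s : α} (hs : IsLUB {a, b} s) :
    c a ≤ c s ∧ c b ≤ c s ∧ ∀ w ∈ Z, c a ≤ w → c b ≤ w → c s ≤ w := by
  refine ⟨hc.cover_mono (hs.1 (by simp)), hc.cover_mono (hs.1 (by simp)), ?_⟩
  intro w hw haw hbw
  refine hc.cover_le hw (hs.2 ?_)
  rintro t (rfl | rfl)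
  exacts [(hc.le_cover t).trans haw, (hc.le_cover t).trans hbw]

end IsZCover

variable [OrderBot α]

theorem IsZCover.zDisjoint (hc : IsZCover Z c) {A : Set α} (hA : A.PairwiseDisjoint c) :
    ZDisjoint Z A :=
  ⟨c, fun p _ => ⟨hc.mem p, hc.le_cover p⟩, fun _ hp _ hq hpq => hA hp hq hpq⟩

theorem zDisjoint_pair_s9 {x z q r : α} (hx : x ∈ Z) (hz : z ∈ Z) (hxz : Disjoint x z)
    (hqx : q ≤ x) (hrz : r ≤ z) : ZDisjoint Z {q, r} := by
  classical
  refine ⟨fun t => if t = q then x else z, ?_, ?_⟩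
  · rintro t (rfl | rfl)
    · simp [hx, hqx]
    · dsimp only
      split_ifs with h
      exacts [⟨hx, h ▸ hqx⟩, ⟨hz, hrz⟩]
  · rintro a (rfl | rfl) b (rfl | rfl) hab
    · exact absurd rfl hab
    · simp [Ne.symm hab, hxz]
    · simp [hab, hxz.symm]
    · exact absurd rfl hab

theorem ZComplete.exists_decomposition (hI : ZComplete Z I) (hcen : SCentral Z I)
    {p y : α} (hp : p ∈ I) (hy : y ∈ Z) :
    ∃ z ∈ Z, Disjoint y z ∧ ∃ q r, q ≤ y ∧ r ≤ z ∧ IsLUB {q, r} p ∧ q ∈ I ∧ r ∈ I := by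
  obtain ⟨z, hz, hyz, q, r, hqy, hrz, hlub⟩ := hcen p hp y hy
  exact ⟨z, hz, hyz, q, r, hqy, hrz, hlub,
    hI.2 q r p (zDisjoint_pair_s9 hy hz hyz hqy hrz) hlub hp⟩

theorem exists_cover_eq_of_le_cover (hc : IsZCover Z c) (hzm : ZModular Z)
    (hI : ZComplete Z I) (hcen : SCentral Z I) {x p : α} (hx : x ∈ Z) (hp : p ∈ I)
    (hxp : x ≤ c p) : ∃ u ∈ I, c u = x := by
  obtain ⟨z, hz, hxz, q, r, hqx, hrz, hlub, hqI, -⟩ := hI.exists_decomposition hcen hp hx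
  refine ⟨q, hqI, le_antisymm (hc.cover_le hx hqx) ?_⟩
  rw [Set.pair_comm] at hlub
  obtain ⟨-, hq_glb⟩ := hzm z hz x hx hxz.symm (c r) (hc.mem r) (c q) (hc.mem q)
    (hc.cover_le hz hrz) (hc.cover_le hx hqx) (c p) (hc.mem p) (hc.cover_isLUB_pair hlub)
  exact hq_glb x hx le_rfl hxp

theorem exists_maximal_pairwiseDisjoint_subset_s9 (I : Set α) (c : α → α) :
    ∃ A, Maximal (fun A => A ⊆ I ∧ A.PairwiseDisjoint c) A := by
  refine zorn_subset _ fun 𝒞 h𝒞 hchain => ⟨⋃₀ 𝒞, ⟨?_, ?_⟩, fun _ => Set.subset_sUnion_of_mem⟩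
  · exact Set.sUnion_subset fun A hA => (h𝒞 hA).1
  · exact (Set.pairwise_sUnion hchain.directedOn).2 fun A hA => (h𝒞 hA).2

theorem exists_isGreatest_image_cover (hc : IsZCover Z c) (hI : ZComplete Z I)
    (hcen : SCentral Z I) : ∃ m, IsGreatest (c '' I) m := by
  obtain ⟨A, ⟨hAI, hAc⟩, hAmax⟩ := exists_maximal_pairwiseDisjoint_subset_s9 I c
  obtain ⟨p, hpA, hpI⟩ := hI.1 A hAI (hc.zDisjoint hAc)
  refine ⟨c p, ⟨p, hpI, rfl⟩, ?_⟩
  rintro _ ⟨p₀, hp₀, rfl⟩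
  obtain ⟨z, hz, hpz, q, r, hqp, hrz, hlub, -, hrI⟩ := hI.exists_decomposition hcen hp₀ (hc.mem p)
  have hrA : r ∈ A := by
    have hinsert : insert r A ⊆ I ∧ (insert r A).PairwiseDisjoint c := by
      refine ⟨Set.insert_subset hrI hAI, hAc.insert fun a ha _ => ?_⟩
      exact (hpz.mono (hc.cover_mono (hpA.1 ha)) (hc.cover_le hz hrz)).symm
    exact hAmax hinsert (Set.subset_insert r A) (Set.mem_insert r A)
  refine hc.cover_le (hc.mem p) (hlub.2 ?_)
  rintro t (rfl | rfl)
  exacts [hqp, (hpA.1 hrA).trans (hc.le_cover p)]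

end

theorem stmt9_general {α : Type*} [PartialOrder α] [OrderBot α] (Z I : Set α) (c : α → α)
    (hc : ∀ p, c p ∈ Z ∧ IsGLB {z | z ∈ Z ∧ p ≤ z} (c p))
    (hcen : SCentral Z Set.univ) (hzm : ZModular Z)
    (hI : ZComplete Z I) :
    (∀ p ∈ Z, ∀ q ∈ c '' I, p ≤ q → p ∈ c '' I) ∧
    (∀ S ⊆ c '' I, ∃ q ∈ c '' I, ∀ p ∈ S, p ≤ q) := by
  have hcenI : SCentral Z I := fun p _ => hcen p trivial
  refine ⟨?_, fun S hS => ?_⟩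
  · rintro x hx _ ⟨p, hp, rfl⟩ hxp
    exact exists_cover_eq_of_le_cover hc hzm hI hcenI hx hp hxp
  · obtain ⟨m, hm, hm_max⟩ := exists_isGreatest_image_cover hc hI hcenI
    exact ⟨m, hm, fun p hp => hm_max (hS hp)⟩

/-- If `Z` is a `Z`-modular lower complete sublattice of `P` which is `P`-central and
`I` is `Z`-complete, then `c_Z I` is a complete ideal of the subposet `Z`: a lower set
in `Z` that is completely upwards directed. -/
theorem stmt9 {α : Type*} [PartialOrder α] [OrderBot α] (Z I : Set α) (c : α → α)
    (hZl : ∀ S ⊆ Z, ∃ i, IsGLB S i ∧ i ∈ Z)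
    (hc : ∀ p, c p ∈ Z ∧ IsGLB {z | z ∈ Z ∧ p ≤ z} (c p))
    (hcen : SCentral Z Set.univ) (hzm : ZModular Z)
    (hI : ZComplete Z I) :
    (∀ p ∈ Z, ∀ q ∈ c '' I, p ≤ q → p ∈ c '' I) ∧
    (∀ S ⊆ c '' I, ∃ q ∈ c '' I, ∀ p ∈ S, p ≤ q) :=
  stmt9_general Z I c hc hcen hzm hI
end

section
/- Let P be a poset with least element 0 which is Z-complete, where Z ⊆ P satisfies: for all y, z ∈ Z the infimum y∧z exists in P and lies in Z; every Z-disjoint pair {p,q} ⊆ Z has a least upper bound within the subposet Z; and Z is Z-modular. Then the relations ≾_Z and ∼_Z are Z-complete binary relations on P. -/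
section ZDisjoint

variable {β γ : Type*} [PartialOrder β] [OrderBot β] [PartialOrder γ] [OrderBot γ]

lemma zDisjoint_pair_s13 {Z : Set β} {a b : β} (ha : a ∈ Z) (hb : b ∈ Z) (hab : Disjoint a b) :
    ZDisjoint Z {a, b} := by
  refine ⟨id, ?_, ?_⟩
  · rintro p (rfl | rfl)
    exacts [⟨ha, le_rfl⟩, ⟨hb, le_rfl⟩]
  · rintro p (rfl | rfl) q (rfl | rfl) hpq
    exacts [absurd rfl hpq, hab, hab.symm, absurd rfl hpq]

lemma ZDisjoint.exists_of_ne {Z : Set β} {p q : β} (h : ZDisjoint Z {p, q}) (hpq : p ≠ q) :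
    ∃ a ∈ Z, ∃ b ∈ Z, p ≤ a ∧ q ≤ b ∧ Disjoint a b := by
  obtain ⟨f, hf, hdisj⟩ := h
  obtain ⟨hpZ, hp⟩ := hf p (by simp)
  obtain ⟨hqZ, hq⟩ := hf q (by simp)
  exact ⟨f p, hpZ, f q, hqZ, hp, hq, hdisj p (by simp) q (by simp) hpq⟩

lemma ZDisjoint.image {Z : Set β} {Z' : Set γ} {S : Set β} {f : β → γ} (hf : Monotone f)
    (hZ : Set.MapsTo f Z Z') (hdisj : ∀ a b, Disjoint a b → Disjoint (f a) (f b))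
    (h : ZDisjoint Z S) : ZDisjoint Z' (f '' S) := by
  obtain ⟨g, hg, hgdisj⟩ := h
  refine ⟨fun p => f (g (Function.invFunOn f S p)), fun p hp => ?_, fun p hp q hq hpq => ?_⟩
  · obtain ⟨hgZ, hle⟩ := hg _ (Function.invFunOn_mem hp)
    exact ⟨hZ hgZ, (Function.invFunOn_eq hp).symm.le.trans (hf hle)⟩
  · refine hdisj _ _ (hgdisj _ (Function.invFunOn_mem hp) _ (Function.invFunOn_mem hq) ?_)
    intro he
    exact hpq ((Function.invFunOn_eq hp).symm.trans (he ▸ Function.invFunOn_eq hq))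

end ZDisjoint

section ZComplete

variable {β γ : Type*} [PartialOrder β] [OrderBot β] [PartialOrder γ] [OrderBot γ]

lemma ZComplete.inter {Z I J : Set β} (hI : ZComplete Z I) (hJ : ZComplete Z J) :
    ZComplete Z (I ∩ J) := by
  refine ⟨fun S hS hd => ?_, fun p q s hd hs hsIJ => ?_⟩
  · obtain ⟨s, hs, hsI⟩ := hI.1 S (hS.trans Set.inter_subset_left) hd
    obtain ⟨t, ht, htJ⟩ := hJ.1 S (hS.trans Set.inter_subset_right) hd
    exact ⟨s, hs, hsI, hs.unique ht ▸ htJ⟩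
  · obtain ⟨hpI, hqI⟩ := hI.2 p q s hd hs hsIJ.1
    obtain ⟨hpJ, hqJ⟩ := hJ.2 p q s hd hs hsIJ.2
    exact ⟨⟨hpI, hpJ⟩, hqI, hqJ⟩

lemma ZComplete.preimage_orderIso {Z I : Set γ} (e : β ≃o γ) (h : ZComplete Z I) :
    ZComplete (e ⁻¹' Z) (e ⁻¹' I) := by
  have hmap (S : Set β) (hd : ZDisjoint (e ⁻¹' Z) S) : ZDisjoint Z (e '' S) :=
    hd.image e.monotone (Set.mapsTo_preimage e Z) fun _ _ hab c hca hcb => by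
      simpa using e.symm_apply_le.1 (hab (e.symm_apply_le.2 hca) (e.symm_apply_le.2 hcb))
  refine ⟨fun S hS hd => ?_, fun p q s hd hs hsI => ?_⟩
  · obtain ⟨s, hs, hsI⟩ := h.1 (e '' S) (Set.image_subset_iff.2 hS) (hmap S hd)
    exact ⟨e.symm s, e.isLUB_image.1 hs, by simpa using hsI⟩
  · have hd' := hmap _ hd
    rw [Set.image_pair] at hd'
    have hs' : IsLUB {e p, e q} (e s) := by
      rw [← Set.image_pair]
      exact e.isLUB_image'.2 hs
    exact h.2 _ _ _ hd' hs' hsI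

end ZComplete

section Relation

variable {α : Type*} [PartialOrder α]

def ZPrec (Z : Set α) (p q : α) : Prop :=
  ∀ z ∈ Z, q ≤ z → p ≤ z

def ZInfClosed (Z : Set α) : Prop :=
  ∀ y ∈ Z, ∀ z ∈ Z, ∃ w, IsGLB {y, z} w ∧ w ∈ Z

variable {Z : Set α}

lemma zPrec_of_isLUB {S : Set (α × α)} {s : α × α} (hS : ∀ t ∈ S, ZPrec Z t.1 t.2)
    (hs : IsLUB S s) : ZPrec Z s.1 s.2 := by
  intro z hz hsz
  refine (isLUB_prod.1 hs).1.2 ?_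
  rintro _ ⟨t, ht, rfl⟩
  exact hS t ht z hz ((hs.1 ht).2.trans hsz)

lemma preimage_prodComm_diag :
    OrderIso.prodComm ⁻¹' ((fun z => (z, z)) '' Z) = (fun z => (z, z)) '' Z := by
  ext ⟨p, q⟩
  simp [and_comm, eq_comm]

variable [OrderBot α]

def ZDirected (Z : Set α) : Prop :=
  ∀ p ∈ Z, ∀ q ∈ Z, ZDisjoint Z {p, q} →
    ∃ s ∈ Z, p ≤ s ∧ q ≤ s ∧ ∀ w ∈ Z, p ≤ w → q ≤ w → s ≤ w

lemma le_of_le_of_le_zSup (hinf : ZInfClosed Z) (hzm : ZModular Z) {a b w s p : α}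
    (ha : a ∈ Z) (hb : b ∈ Z) (hab : Disjoint a b) (hw : w ∈ Z) (hwa : w ≤ a) (hs : s ∈ Z)
    (hsup : b ≤ s ∧ w ≤ s ∧ ∀ u ∈ Z, b ≤ u → w ≤ u → s ≤ u) (hpa : p ≤ a) (hps : p ≤ s) :
    p ≤ w := by
  obtain ⟨u, hu, huZ⟩ := hinf a ha s hs
  have hmod := hzm b hb a ha hab.symm b hb w hw le_rfl hwa s hs hsup
  exact (hu.2 (by simp [hpa, hps])).trans (hmod.2 u huZ (hu.1 (by simp)) (hu.1 (by simp)))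

lemma zPrec_cancel_disjoint (hinf : ZInfClosed Z) (hdir : ZDirected Z) (hzm : ZModular Z)
    {a b p₁ p₂ q : α} (ha : a ∈ Z) (hb : b ∈ Z) (hab : Disjoint a b) (hp₁ : p₁ ≤ a)
    (hp₂ : p₂ ≤ a) (hq : q ≤ b) (H : ∀ z ∈ Z, p₂ ≤ z → q ≤ z → p₁ ≤ z) : ZPrec Z p₁ p₂ := by
  intro z hz hp₂z
  obtain ⟨w, hw, hwZ⟩ := hinf z hz a ha
  have hwa : w ≤ a := hw.1 (by simp)
  have hp₂w : p₂ ≤ w := hw.2 (by simp [hp₂z, hp₂])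
  obtain ⟨s, hs, hsup⟩ := hdir b hb w hwZ (zDisjoint_pair_s13 hb hwZ (hab.mono_left hwa).symm)
  calc p₁ ≤ w := le_of_le_of_le_zSup hinf hzm ha hb hab hwZ hwa hs hsup hp₁
        (H s hs (hp₂w.trans hsup.2.1) (hq.trans hsup.1))
    _ ≤ z := hw.1 (by simp)

lemma zPrec_of_isLUB_pair (hinf : ZInfClosed Z) (hdir : ZDirected Z) (hzm : ZModular Z)
    {x y s : α × α} (hd : ZDisjoint ((fun z => (z, z)) '' Z) {x, y}) (hlub : IsLUB {x, y} s)
    (hs : ZPrec Z s.1 s.2) : ZPrec Z x.1 x.2 := by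
  rcases eq_or_ne x y with rfl | hne
  · rw [Set.pair_eq_singleton] at hlub
    rwa [isLUB_singleton.unique hlub]
  obtain ⟨_, ⟨a, ha, rfl⟩, _, ⟨b, hb, rfl⟩, hxa, hyb, hab⟩ := hd.exists_of_ne hne
  refine zPrec_cancel_disjoint hinf hdir hzm ha hb (Prod.disjoint_iff.1 hab).1 hxa.1 hxa.2 hyb.2
    fun z hz hxz hyz => ?_
  have hxs : x ≤ s := hlub.1 (by simp)
  have hys : y ≤ s := hlub.1 (by simp)
  have hsz : s ≤ (s.1, z) := hlub.2 (by
    rintro t (rfl | rfl)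
    exacts [⟨hxs.1, hxz⟩, ⟨hys.1, hyz⟩])
  exact hxs.1.trans (hs z hz hsz.2)

lemma ZComplete.exists_isLUB_prod (hP : ZComplete Z Set.univ) {S : Set (α × α)}
    (hS : ZDisjoint ((fun z => (z, z)) '' Z) S) : ∃ s, IsLUB S s := by
  have hdiag : ∀ f : α × α → α, Monotone f → (∀ z, f (z, z) = z) →
      (∀ a b, Disjoint a b → Disjoint (f a) (f b)) → ∃ s, IsLUB (f '' S) s := by
    intro f hf hfz hdisj
    have hZ : Set.MapsTo f ((fun z => (z, z)) '' Z) Z := by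
      rintro _ ⟨z, hz, rfl⟩
      simpa [hfz]
    obtain ⟨s, hs, -⟩ := hP.1 _ (Set.subset_univ _) (hS.image hf hZ hdisj)
    exact ⟨s, hs⟩
  obtain ⟨s₁, h₁⟩ := hdiag Prod.fst monotone_fst (fun _ => rfl) fun _ _ h =>
    (Prod.disjoint_iff.1 h).1
  obtain ⟨s₂, h₂⟩ := hdiag Prod.snd monotone_snd (fun _ => rfl) fun _ _ h =>
    (Prod.disjoint_iff.1 h).2
  exact ⟨(s₁, s₂), isLUB_prod.2 ⟨h₁, h₂⟩⟩

theorem zComplete_zPrec (hP : ZComplete Z Set.univ) (hinf : ZInfClosed Z) (hdir : ZDirected Z)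
    (hzm : ZModular Z) : ZComplete ((fun z => (z, z)) '' Z) {x : α × α | ZPrec Z x.1 x.2} := by
  refine ⟨fun S hSR hS => ?_, fun x y s hd hlub hs => ?_⟩
  · obtain ⟨s, hs⟩ := hP.exists_isLUB_prod hS
    exact ⟨s, hs, zPrec_of_isLUB hSR hs⟩
  · refine ⟨zPrec_of_isLUB_pair hinf hdir hzm hd hlub hs, ?_⟩
    rw [Set.pair_comm] at hd hlub
    exact zPrec_of_isLUB_pair hinf hdir hzm hd hlub hs

end Relation

/-- If `P` is `Z`-complete and `Z` is a `Z`-directed (every `Z`-disjoint pair in `Z` has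
a least upper bound within the subposet `Z`) `Z`-modular lower sublattice of `P` (binary
infima of elements of `Z` exist in `P` and lie in `Z`), then the relations `≾_Z` and
`∼_Z` are `Z`-complete, i.e. as subsets of `P × P` they are `Δ_Z`-complete, where
`p ≾_Z q` iff every `z ∈ Z` above `q` is above `p`, and `p ∼_Z q` iff `p ≾_Z q ≾_Z p`. -/
theorem stmt13 {α : Type*} [PartialOrder α] [OrderBot α] (Z : Set α)
    (hP : ZComplete Z (Set.univ : Set α))
    (hinf : ∀ y ∈ Z, ∀ z ∈ Z, ∃ w, IsGLB {y, z} w ∧ w ∈ Z)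
    (hdir : ∀ p ∈ Z, ∀ q ∈ Z, ZDisjoint Z {p, q} →
      ∃ s ∈ Z, p ≤ s ∧ q ≤ s ∧ ∀ w ∈ Z, p ≤ w → q ≤ w → s ≤ w)
    (hzm : ZModular Z) :
    ZComplete ((fun z => (z, z)) '' Z : Set (α × α))
      {x : α × α | ∀ z ∈ Z, x.2 ≤ z → x.1 ≤ z} ∧
    ZComplete ((fun z => (z, z)) '' Z : Set (α × α))
      {x : α × α | ∀ z ∈ Z, (x.2 ≤ z ↔ x.1 ≤ z)} := by
  have hprec := zComplete_zPrec hP hinf hdir hzm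
  have hswap := hprec.preimage_orderIso OrderIso.prodComm
  rw [preimage_prodComm_diag] at hswap
  refine ⟨hprec, ?_⟩
  convert hprec.inter hswap using 1
  ext x
  simp [ZPrec, iff_def, forall_and]
end
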